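/- Let H_{k₀} = ⋂_{l≥k₀} ⋃_{0≤p<q_l} [(2p+1)/(2q_l) − 1/(4q_l), (2p+1)/(2q_l) + 1/(4q_l)] for a strictly increasing sequence of positive integers (q_l). If q_{l+1} ≥ 4 q_l for all l, then H_{k₀} is a nonempty compact subset of [0,1] with empty interior. -/

import Mathlib

open Set Filter Topology

/-!
Write `middleHalf n p` for the middle half of the grid cell `[p / n, (p + 1) / n]`, so that
level `l` of `H_{k₀}` is the union of the middle halves of the `q_l` cells. A middle half at
level `l` has length `1 / (2 q_l)`, while a cell at level `l + 1` has length
`1 / q_{l+1} ≤ 1 / (4 q_l)`; hence it contains a whole cell, and with it a middle half, of level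
`l + 1`. Choosing such intervals successively gives a nested sequence of compact intervals, whose
common point lies in `H_{k₀}`. No grid point `k / q_l` lies in level `l`, and these grids become
arbitrarily fine, so `H_{k₀}` contains no interval.
-/

theorem exists_seq_of_forall_exists_succ {α : Type*} {P : ℕ → α → Prop} {R : ℕ → α → α → Prop}
    {a : α} (ha : P 0 a) (h : ∀ n a, P n a → ∃ b, P (n + 1) b ∧ R n a b) :
    ∃ f : ℕ → α, ∀ n, P n (f n) ∧ R n (f n) (f (n + 1)) := by
  choose g hgP hgR using h
  let F : ∀ n, {a // P n a} := fun n =>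
    Nat.rec ⟨a, ha⟩ (fun n x => ⟨g n x.1 x.2, hgP n x.1 x.2⟩) n
  exact ⟨fun n => (F n).1, fun n => ⟨(F n).2, hgR n _ (F n).2⟩⟩

def middleHalf (n p : ℕ) : Set ℝ :=
  Icc ((2 * (p : ℝ) + 1) / (2 * (n : ℝ)) - 1 / (4 * (n : ℝ)))
    ((2 * (p : ℝ) + 1) / (2 * (n : ℝ)) + 1 / (4 * (n : ℝ)))

def middleHalves (n : ℕ) : Set ℝ := ⋃ p ∈ Finset.range n, middleHalf n p

theorem middleHalf_nonempty (n p : ℕ) : (middleHalf n p).Nonempty :=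
  nonempty_Icc.2 <| by
    have : 0 ≤ 1 / (4 * (n : ℝ)) := by positivity
    linarith

theorem middleHalf_eq_Icc {n : ℕ} (hn : 0 < n) (p : ℕ) :
    middleHalf n p = Icc ((4 * (p : ℝ) + 1) / (4 * n)) ((4 * (p : ℝ) + 3) / (4 * n)) := by
  have hn' : (0 : ℝ) < n := by exact_mod_cast hn
  unfold middleHalf
  congr 1 <;> field_simp <;> ring

theorem middleHalf_subset_Icc {n : ℕ} (hn : 0 < n) (p : ℕ) :
    middleHalf n p ⊆ Icc ((p : ℝ) / n) ((p + 1) / n) := by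
  have hn' : (0 : ℝ) < n := by exact_mod_cast hn
  rw [middleHalf_eq_Icc hn]
  apply Icc_subset_Icc
  · rw [div_le_div_iff₀ hn' (by positivity)]; linarith
  · rw [div_le_div_iff₀ (by positivity) hn']; linarith

theorem exists_middleHalf_subset_middleHalf {b c p : ℕ} (h4 : 4 * b ≤ c) (hp : p < b) :
    ∃ p' < c, middleHalf c p' ⊆ middleHalf b p := by
  have hb0 : 0 < b := by omega
  have hc0 : 0 < c := by omega
  have hb : (0 : ℝ) < b := by exact_mod_cast hb0
  have hc : (0 : ℝ) < c := by exact_mod_cast hc0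
  have h4' : 4 * (b : ℝ) ≤ c := by exact_mod_cast h4
  have hp' : (p : ℝ) + 1 ≤ b := by exact_mod_cast hp
  set t : ℝ := c * (4 * p + 1) / (4 * b)
  -- `p' / c` is the first point of the grid `(1 / c) ℤ` to the right of the left end of
  -- `middleHalf b p`; as `1 / c ≤ 1 / (4 b)`, the whole cell `[p' / c, (p' + 1) / c]` fits inside.
  set p' := ⌈t⌉₊
  have ht_le : t ≤ p' := Nat.le_ceil t
  have hlt : (p' : ℝ) < t + 1 := Nat.ceil_lt_add_one (by positivity)
  have hleft : (4 * (p : ℝ) + 1) / (4 * b) ≤ p' / c := by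
    rw [div_le_div_iff₀ (by positivity) hc]
    rw [div_le_iff₀ (by positivity)] at ht_le
    linarith
  have hright : ((p' : ℝ) + 1) / c ≤ (4 * p + 3) / (4 * b) := by
    rw [div_le_div_iff₀ hc (by positivity)]
    have : t * (4 * b) = c * (4 * p + 1) := div_mul_cancel₀ _ (by positivity)
    nlinarith
  refine ⟨p', ?_, ?_⟩
  · have : ((p' : ℝ) + 1) / c ≤ 1 :=
      hright.trans ((div_le_one (by positivity)).2 (by linarith))
    rw [div_le_one hc] at this
    exact_mod_cast (show (p' : ℝ) < c by linarith)
  · rw [middleHalf_eq_Icc hb0 p]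
    exact (middleHalf_subset_Icc hc0 p').trans (Icc_subset_Icc hleft hright)

theorem intCast_div_notMem_middleHalves {n : ℕ} (hn : 0 < n) (k : ℤ) :
    (k : ℝ) / n ∉ middleHalves n := by
  have h4n : (0 : ℝ) < 4 * n := by positivity
  simp only [middleHalves, mem_iUnion, middleHalf_eq_Icc hn, mem_Icc, not_exists]
  rintro p - ⟨h1, h2⟩
  rw [← mul_div_mul_left (k : ℝ) n four_ne_zero, div_le_div_iff_of_pos_right h4n] at h1 h2
  have h1' : 4 * (p : ℤ) + 1 ≤ 4 * k := by exact_mod_cast h1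
  have h2' : 4 * k ≤ 4 * (p : ℤ) + 3 := by exact_mod_cast h2
  omega

theorem isClosed_middleHalves (n : ℕ) : IsClosed (middleHalves n) :=
  isClosed_biUnion_finset fun _ _ => isClosed_Icc

theorem middleHalves_subset_Icc (n : ℕ) : middleHalves n ⊆ Icc 0 1 := by
  simp only [middleHalves, Finset.mem_range, iUnion_subset_iff]
  intro p hp
  have hn : (0 : ℝ) < n := by exact_mod_cast p.zero_le.trans_lt hp
  have hp' : (p : ℝ) + 1 ≤ n := by exact_mod_cast hp
  refine (middleHalf_subset_Icc (by exact_mod_cast hn) p).trans (Icc_subset_Icc ?_ ?_)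
  · positivity
  · rwa [div_le_one hn]

theorem interior_eq_empty_of_eventually_subset_middleHalves {s : Set ℝ} {n : ℕ → ℕ}
    (hn : Tendsto n atTop atTop) (hs : ∀ᶠ l in atTop, s ⊆ middleHalves (n l)) :
    interior s = ∅ := by
  refine eq_empty_iff_forall_notMem.2 fun x hx => ?_
  obtain ⟨ε, hε, hball⟩ := Metric.mem_nhds_iff.1 (mem_interior_iff_mem_nhds.1 hx)
  have hsmall : ∀ᶠ l in atTop, 1 / (n l : ℝ) < ε :=
    (tendsto_one_div_atTop_nhds_zero_nat.comp hn).eventually (gt_mem_nhds hε)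
  obtain ⟨l, hsl, hεl, hpos⟩ := (hs.and (hsmall.and (hn.eventually_gt_atTop 0))).exists
  have hN : (0 : ℝ) < n l := by exact_mod_cast hpos
  set k := ⌊n l * x⌋
  refine intCast_div_notMem_middleHalves hpos k (hsl (hball ?_))
  have h1 : (k : ℝ) ≤ n l * x := Int.floor_le _
  have h2 : n l * x < k + 1 := Int.lt_floor_add_one _
  have hk_le : (k : ℝ) / n l ≤ x := by rw [div_le_iff₀ hN]; linarith
  have hk_gt : x - 1 / n l < k / n l := by
    rw [sub_lt_iff_lt_add, ← add_div, lt_div_iff₀ hN]; linarith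
  rw [Metric.mem_ball, Real.dist_eq, abs_sub_lt_iff]
  constructor <;> linarith

theorem nonempty_biInter_middleHalves {q : ℕ → ℕ} {k₀ : ℕ} (hq : 0 < q k₀)
    (hgrow : ∀ l, 4 * q l ≤ q (l + 1)) : (⋂ l ∈ Ici k₀, middleHalves (q l)).Nonempty := by
  obtain ⟨P, hP⟩ := exists_seq_of_forall_exists_succ
    (P := fun n p => p < q (k₀ + n))
    (R := fun n p p' => middleHalf (q (k₀ + n + 1)) p' ⊆ middleHalf (q (k₀ + n)) p) hq
    fun n p hp => exists_middleHalf_subset_middleHalf (hgrow (k₀ + n)) hp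
  let I : ℕ → Set ℝ := fun n => middleHalf (q (k₀ + n)) (P n)
  have hI : (⋂ n, I n).Nonempty :=
    IsCompact.nonempty_iInter_of_sequence_nonempty_isCompact_isClosed I
      (fun n => (hP n).2) (fun n => middleHalf_nonempty _ _) isCompact_Icc
      (fun _ => isClosed_Icc)
  obtain ⟨x, hx⟩ := hI
  refine ⟨x, mem_iInter₂.2 fun l hl => ?_⟩
  obtain ⟨n, rfl⟩ := Nat.exists_eq_add_of_le hl
  exact mem_biUnion (Finset.mem_range.2 (hP n).1) (mem_iInter.1 hx n)

/-- The set `H_{k₀}` is a nonempty compact subset of `[0,1]` with empty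
interior, provided `q_{l+1} ≥ 4 q_l`. -/
theorem H_k0_cantor (q : ℕ → ℕ) (k₀ : ℕ)
    (hq : StrictMono q) (hq1 : ∀ l, 1 ≤ q l)
    (hgrow : ∀ l, 4 * q l ≤ q (l + 1)) :
    (⋂ l ∈ Set.Ici k₀, ⋃ p ∈ Finset.range (q l),
        Set.Icc ((2 * (p : ℝ) + 1) / (2 * (q l : ℝ)) - 1 / (4 * (q l : ℝ)))
                ((2 * (p : ℝ) + 1) / (2 * (q l : ℝ)) + 1 / (4 * (q l : ℝ)))).Nonempty ∧
    IsCompact (⋂ l ∈ Set.Ici k₀, ⋃ p ∈ Finset.range (q l),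
        Set.Icc ((2 * (p : ℝ) + 1) / (2 * (q l : ℝ)) - 1 / (4 * (q l : ℝ)))
                ((2 * (p : ℝ) + 1) / (2 * (q l : ℝ)) + 1 / (4 * (q l : ℝ)))) ∧
    (⋂ l ∈ Set.Ici k₀, ⋃ p ∈ Finset.range (q l),
        Set.Icc ((2 * (p : ℝ) + 1) / (2 * (q l : ℝ)) - 1 / (4 * (q l : ℝ)))
                ((2 * (p : ℝ) + 1) / (2 * (q l : ℝ)) + 1 / (4 * (q l : ℝ))))
      ⊆ Set.Icc (0 : ℝ) 1 ∧
    interior (⋂ l ∈ Set.Ici k₀, ⋃ p ∈ Finset.range (q l),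
        Set.Icc ((2 * (p : ℝ) + 1) / (2 * (q l : ℝ)) - 1 / (4 * (q l : ℝ)))
                ((2 * (p : ℝ) + 1) / (2 * (q l : ℝ)) + 1 / (4 * (q l : ℝ)))) = ∅ := by
  have hsub : ∀ l ≥ k₀, ⋂ l ∈ Ici k₀, middleHalves (q l) ⊆ middleHalves (q l) :=
    fun l hl => biInter_subset_of_mem hl
  have hunit : (⋂ l ∈ Ici k₀, middleHalves (q l)) ⊆ Icc 0 1 :=
    (hsub k₀ le_rfl).trans (middleHalves_subset_Icc _)
  exact ⟨nonempty_biInter_middleHalves (hq1 k₀) hgrow,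
    isCompact_Icc.of_isClosed_subset (isClosed_biInter fun l _ => isClosed_middleHalves _) hunit,
    hunit,
    interior_eq_empty_of_eventually_subset_middleHalves hq.tendsto_atTop
      (eventually_atTop.2 ⟨k₀, hsub⟩)⟩
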